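/- arXiv:2509.15403 — 4 statements merged into one kernel-verified Lean document; each statement's English description precedes it below -/
import Mathlib

section
/- Let L₁, …, L_{n+1} : [0,1] → [0,1] be antitone functions, α ∈ (0,1), and suppose L_i(1) ≤ α for all i. Define λ̂ = inf{λ ∈ [0,1] : R̂_n(λ) ≤ α - (1-α)/n} (with λ̂ = 1 if the set is empty) and λ̂' = inf{λ ∈ [0,1] : R̂_{n+1}(λ) ≤ α}. Then λ̂' ≤ λ̂. -/
/-! Every λ admissible for the calibration on n points is admissible on n + 1 points: the
slack (1 - α)/n in the n-point threshold absorbs the extra loss, which is at most 1. The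
fallback value λ = 1 is admissible because every loss at 1 is at most α. Hence the
(n + 1)-point feasible set contains the n-point one together with 1, and its infimum is
smaller. -/

lemma sum_range_succ_div_le_of_sum_range_div_le {n : ℕ} (hn : 1 ≤ n) {a : ℕ → ℝ} {α : ℝ}
    (han : a n ≤ 1) (h : (∑ i ∈ Finset.range n, a i) / n ≤ α - (1 - α) / n) :
    (∑ i ∈ Finset.range (n + 1), a i) / (n + 1) ≤ α := by
  have hn₀ : (0 : ℝ) < n := by exact_mod_cast hn
  have hsum : ∑ i ∈ Finset.range n, a i ≤ α * n - (1 - α) := by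
    rw [div_le_iff₀ hn₀] at h
    calc _ ≤ (α - (1 - α) / n) * n := h
      _ = α * n - (1 - α) := by field_simp
  rw [div_le_iff₀ (by positivity), Finset.sum_range_succ]
  linarith

theorem stmt_7_general (n : ℕ) (hn : 1 ≤ n) (L : ℕ → ℝ → ℝ)
    (hL : ∀ i, ∀ lam ∈ Set.Icc (0:ℝ) 1, L i lam ∈ Set.Icc (0:ℝ) 1)
    (α : ℝ)
    (hL1 : ∀ i, L i 1 ≤ α) :
    sInf {lam ∈ Set.Icc (0:ℝ) 1 | (∑ i ∈ Finset.range (n+1), L i lam) / (n+1) ≤ α} ≤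
      sInf ({lam ∈ Set.Icc (0:ℝ) 1 |
        (∑ i ∈ Finset.range n, L i lam) / n ≤ α - (1 - α) / n} ∪ {1}) := by
  refine csInf_le_csInf ⟨0, fun _ hx => hx.1.1⟩ ⟨1, Or.inr rfl⟩ ?_
  rintro lam (⟨hlam, hrisk⟩ | rfl)
  · exact ⟨hlam, sum_range_succ_div_le_of_sum_range_div_le hn (hL n lam hlam).2 hrisk⟩
  · refine ⟨⟨zero_le_one, le_rfl⟩, ?_⟩
    simpa [Finset.expect_eq_sum_div_card] using
      Finset.expect_le (Finset.nonempty_range_add_one (n := n)) fun i _ => hL1 i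

/-- With antitone losses L_i : [0,1] → [0,1], L_i(1) ≤ α,
    λ̂ = inf{λ : R̂_n(λ) ≤ α - (1-α)/n} (1 if empty) and
    λ̂' = inf{λ : R̂_{n+1}(λ) ≤ α}, we have λ̂' ≤ λ̂. -/
theorem stmt_7 (n : ℕ) (hn : 1 ≤ n) (L : ℕ → ℝ → ℝ)
    (hL : ∀ i, ∀ lam ∈ Set.Icc (0:ℝ) 1, L i lam ∈ Set.Icc (0:ℝ) 1)
    (hant : ∀ i, AntitoneOn (L i) (Set.Icc (0:ℝ) 1))
    (α : ℝ) (hα : α ∈ Set.Ioo (0:ℝ) 1)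
    (hL1 : ∀ i, L i 1 ≤ α) :
    sInf {lam ∈ Set.Icc (0:ℝ) 1 | (∑ i ∈ Finset.range (n+1), L i lam) / (n+1) ≤ α} ≤
      sInf ({lam ∈ Set.Icc (0:ℝ) 1 |
        (∑ i ∈ Finset.range n, L i lam) / n ≤ α - (1 - α) / n} ∪ {1}) :=
  stmt_7_general n hn L hL α hL1
end

section
/- Let L₁, …, L_{n+1} : [0,1] → [0,1] be antitone and right-continuous with L_i(1) ≤ α for α ∈ (0,1). With λ̂' = inf{λ ∈ [0,1] : (1/(n+1)) ∑_{i=1}^{n+1} L_i(λ) ≤ α}, we have (1/(n+1)) ∑_{i=1}^{n+1} L_i(λ̂') ≤ α; i.e., the infimum is attained as an inequality at λ̂'. -/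
/-!
The infimum of a nonempty set bounded below lies in the closure of the set and the set lies to its
right, so a function that is right-continuous at the infimum keeps any upper bound it has on the set.
The mean risk is right-continuous below 1, and at 1 the bound holds because each `L i 1 ≤ α`.
-/

open Set

theorem map_csInf_le_of_continuousWithinAt_Ici {α β : Type*} [ConditionallyCompleteLinearOrder α]
    [TopologicalSpace α] [OrderTopology α] [Preorder β] [TopologicalSpace β] [ClosedIicTopology β]
    {f : α → β} {s : Set α} {c : β} (hne : s.Nonempty) (hbdd : BddBelow s)
    (hf : ContinuousWithinAt f (Ici (sInf s)) (sInf s)) (hs : ∀ x ∈ s, f x ≤ c) :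
    f (sInf s) ≤ c := by
  have hfs : ContinuousWithinAt f s (sInf s) := hf.mono fun x hx => csInf_le hbdd hx
  have hmem : f (sInf s) ∈ closure (f '' s) := hfs.mem_closure_image (csInf_mem_closure hne hbdd)
  exact isClosed_Iic.closure_subset_iff.2 (image_subset_iff.2 hs) hmem

theorem stmt_8_general (n : ℕ) (L : ℕ → ℝ → ℝ)
    (hrc : ∀ i, ∀ lam ∈ Set.Ico (0:ℝ) 1, ContinuousWithinAt (L i) (Set.Ici lam) lam)
    (α : ℝ)
    (hL1 : ∀ i, L i 1 ≤ α) :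
    (∑ i ∈ Finset.range (n+1),
        L i (sInf {lam ∈ Set.Icc (0:ℝ) 1 |
          (∑ j ∈ Finset.range (n+1), L j lam) / (n+1) ≤ α})) / (n+1) ≤ α := by
  set R : ℝ → ℝ := fun lam => (∑ j ∈ Finset.range (n+1), L j lam) / (n+1)
  set S : Set ℝ := {lam ∈ Icc (0:ℝ) 1 | R lam ≤ α}
  have hR1 : R 1 ≤ α := by
    have hsum : ∑ j ∈ Finset.range (n+1), L j 1 ≤ (n+1) * α := by
      simpa using Finset.sum_le_card_nsmul (Finset.range (n+1)) _ α fun j _ => hL1 j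
    exact (div_le_iff₀' (by positivity)).2 hsum
  have h1S : (1:ℝ) ∈ S := ⟨right_mem_Icc.2 zero_le_one, hR1⟩
  have hbdd : BddBelow S := ⟨0, fun x hx => hx.1.1⟩
  have hinf : sInf S ∈ Icc (0:ℝ) 1 := ⟨le_csInf ⟨1, h1S⟩ fun x hx => hx.1.1, csInf_le hbdd h1S⟩
  change R (sInf S) ≤ α
  rcases hinf.2.eq_or_lt with h | h
  · rw [h]; exact hR1
  · refine map_csInf_le_of_continuousWithinAt_Ici ⟨1, h1S⟩ hbdd ?_ fun x hx => hx.2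
    exact (tendsto_finsetSum _ fun j _ => hrc j _ ⟨hinf.1, h⟩).div_const _

/-- With antitone, right-continuous losses L_i : [0,1] → [0,1], L_i(1) ≤ α, and
    λ̂' = inf{λ ∈ [0,1] : R̂_{n+1}(λ) ≤ α}, the bound R̂_{n+1}(λ̂') ≤ α holds. -/
theorem stmt_8 (n : ℕ) (hn : 1 ≤ n) (L : ℕ → ℝ → ℝ)
    (hL : ∀ i, ∀ lam ∈ Set.Icc (0:ℝ) 1, L i lam ∈ Set.Icc (0:ℝ) 1)
    (hant : ∀ i, AntitoneOn (L i) (Set.Icc (0:ℝ) 1))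
    (hrc : ∀ i, ∀ lam ∈ Set.Ico (0:ℝ) 1, ContinuousWithinAt (L i) (Set.Ici lam) lam)
    (α : ℝ) (hα : α ∈ Set.Ioo (0:ℝ) 1)
    (hL1 : ∀ i, L i 1 ≤ α) :
    (∑ i ∈ Finset.range (n+1),
        L i (sInf {lam ∈ Set.Icc (0:ℝ) 1 |
          (∑ j ∈ Finset.range (n+1), L j lam) / (n+1) ≤ α})) / (n+1) ≤ α :=
  stmt_8_general n L hrc α hL1
end

section
/- (Conformal risk control) Let L₁, …, L_{n+1} be random functions from [0,1] to [0,1] whose joint distribution is exchangeable (invariant under permutations of indices), each almost surely antitone and right-continuous with L_i(1) ≤ α for a fixed α ∈ (0,1). Let λ̂ = inf{λ : (1/n) ∑_{i=1}^n L_i(λ) ≤ α - (1-α)/n} (taking λ̂ = 1 if no such λ exists). Then E[L_{n+1}(λ̂)] ≤ α. -/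
/-! The oracle threshold `λ' = inf {λ : ∑_{i ≤ n+1} L_i(λ) ≤ (n+1) α}` is a symmetric function of
all `n + 1` losses, and `λ' ≤ λ̂`: adding `L_{n+1}(λ) ≤ 1` to a `λ` admissible for `λ̂` shows it
admissible for `λ'`. Hence `L_{n+1}(λ̂) ≤ L_{n+1}(λ')` by antitonicity, while exchangeability
gives `E[L_{n+1}(λ')] = E[L_j(λ')]` for every `j`, so that
`(n+1) E[L_{n+1}(λ')] = E[∑_j L_j(λ')] ≤ (n+1) α` by right-continuity. -/

open MeasureTheory Set

/- Both functionals query their function at rational points only, which makes them measurable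
for the product σ-algebra on `ℝ → ℝ`, unlike the real infimum of the sublevel set and the
evaluation `h x` that they replace for antitone right-continuous functions. -/
noncomputable def ratThreshold (S : ℝ → ℝ) (c : ℝ) : ℝ :=
  ⨅ q : ℚ, if (q : ℝ) ∈ Icc 0 1 ∧ S q ≤ c then (q : ℝ) else 1

noncomputable def ratRightSup (h : ℝ → ℝ) (x : ℝ) : ℝ :=
  ⨆ q : ℚ, if x < q ∧ (q : ℝ) ≤ 1 then h q else h 1

section ratThreshold

variable {S : ℝ → ℝ} {c : ℝ}

theorem ratThreshold_bddBelow (S : ℝ → ℝ) (c : ℝ) :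
    BddBelow (range fun q : ℚ => if (q : ℝ) ∈ Icc 0 1 ∧ S q ≤ c then (q : ℝ) else 1) := by
  refine ⟨0, forall_mem_range.2 fun q => ?_⟩
  split_ifs with h
  exacts [h.1.1, zero_le_one]

theorem ratThreshold_mem_Icc (S : ℝ → ℝ) (c : ℝ) : ratThreshold S c ∈ Icc 0 1 := by
  refine ⟨le_ciInf fun q => ?_, (ciInf_le (ratThreshold_bddBelow S c) 2).trans ?_⟩
  · split_ifs with h
    exacts [h.1.1, zero_le_one]
  · rw [if_neg (by norm_num)]

theorem ratThreshold_le_rat {q : ℚ} (hq : (q : ℝ) ∈ Icc 0 1) (hSq : S q ≤ c) :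
    ratThreshold S c ≤ q :=
  (ciInf_le (ratThreshold_bddBelow S c) q).trans_eq (if_pos ⟨hq, hSq⟩)

theorem ratThreshold_le {x : ℝ} (hx : x ∈ Icc 0 1) (hS : ∀ y ∈ Icc x 1, S y ≤ c) :
    ratThreshold S c ≤ x := by
  rcases hx.2.eq_or_lt with rfl | hx1
  · exact (ratThreshold_mem_Icc S c).2
  refine le_of_forall_gt_imp_ge_of_dense fun a hxa => ?_
  obtain ⟨q, hxq, hqa⟩ := exists_rat_btwn (lt_min hxa hx1)
  have hq : (q : ℝ) ∈ Icc x 1 := ⟨hxq.le, (hqa.trans_le (min_le_right _ _)).le⟩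
  exact (ratThreshold_le_rat ⟨hx.1.trans hq.1, hq.2⟩ (hS q hq)).trans
    (hqa.trans_le (min_le_left _ _)).le

theorem apply_ratThreshold_le (hrc : ∀ x ∈ Ico 0 1, ContinuousWithinAt S (Ici x) x)
    (h1 : S 1 ≤ c) : S (ratThreshold S c) ≤ c := by
  obtain ⟨ht0, ht1⟩ := ratThreshold_mem_Icc S c
  rcases ht1.eq_or_lt with ht1 | ht1
  · rwa [ht1]
  refine le_of_forall_pos_lt_add fun ε hε => ?_
  obtain ⟨δ, hδ, hS⟩ := Metric.continuousWithinAt_iff.1 (hrc _ ⟨ht0, ht1⟩) ε hε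
  obtain ⟨q, hq⟩ := exists_lt_of_ciInf_lt
    (lt_add_of_pos_right (ratThreshold S c) (lt_min hδ (sub_pos.2 ht1)))
  split_ifs at hq with hqual
  · have htq : ratThreshold S c ≤ q := ratThreshold_le_rat hqual.1 hqual.2
    have hdist := hS htq (by
      rw [Real.dist_eq, abs_of_nonneg (sub_nonneg.2 htq)]
      linarith [min_le_left δ (1 - ratThreshold S c)])
    rw [Real.dist_eq, abs_lt] at hdist
    linarith [hdist.1, hqual.2]
  · linarith [min_le_right δ (1 - ratThreshold S c)]

end ratThreshold

theorem ratRightSup_eq {h : ℝ → ℝ} {x : ℝ} (hanti : AntitoneOn h (Icc 0 1))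
    (hx : x ∈ Icc 0 1) (hrc : x < 1 → ContinuousWithinAt h (Ici x) x) : ratRightSup h x = h x := by
  rw [ratRightSup]
  have hterm : ∀ q : ℚ, (if x < q ∧ (q : ℝ) ≤ 1 then h q else h 1) ≤ h x := fun q => by
    split_ifs with hq
    · exact hanti hx ⟨hx.1.trans hq.1.le, hq.2⟩ hq.1.le
    · exact hanti hx (right_mem_Icc.2 zero_le_one) hx.2
  have hbdd : BddAbove (range fun q : ℚ => if x < q ∧ (q : ℝ) ≤ 1 then h q else h 1) :=
    ⟨h x, forall_mem_range.2 hterm⟩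
  refine le_antisymm (ciSup_le hterm) ?_
  rcases hx.2.eq_or_lt with rfl | hx1
  · exact le_ciSup_of_le hbdd 0 (by rw [if_neg (by norm_num)])
  refine le_of_forall_pos_lt_add fun ε hε => ?_
  obtain ⟨δ, hδ, hh⟩ := Metric.continuousWithinAt_iff.1 (hrc hx1) ε hε
  obtain ⟨q, hxq, hq⟩ := exists_rat_btwn (lt_min hx1 (lt_add_of_pos_right x hδ))
  have hdist := hh hxq.le (by
    rw [Real.dist_eq, abs_of_nonneg (sub_nonneg.2 hxq.le)]
    linarith [min_le_right 1 (x + δ)])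
  have hle := le_ciSup hbdd q
  rw [if_pos ⟨hxq, (hq.trans_le (min_le_left _ _)).le⟩] at hle
  rw [Real.dist_eq, abs_lt] at hdist
  linarith [hdist.1]

section Measurability

variable {γ : Type*} [MeasurableSpace γ] {F : γ → ℝ → ℝ}

theorem measurable_ratThreshold (hF : ∀ x, Measurable fun a => F a x) (c : ℝ) :
    Measurable fun a => ratThreshold (F a) c :=
  .iInf fun q => .ite ((MeasurableSet.const _).inter (measurableSet_le (hF q) measurable_const))
    measurable_const measurable_const

theorem measurable_ratRightSup (hF : ∀ x, Measurable fun a => F a x) {G : γ → ℝ}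
    (hG : Measurable G) : Measurable fun a => ratRightSup (F a) (G a) :=
  .iSup fun q => .ite ((measurableSet_lt hG measurable_const).inter (MeasurableSet.const _))
    (hF q) (hF 1)

end Measurability

section Exchangeable

variable {Ω ι β : Type*} [MeasurableSpace Ω] [MeasurableSpace β] {μ : Measure Ω}
  {X : Ω → ι → β}

theorem integral_comp_perm_eq (hX : Measurable X) {σ : Equiv.Perm ι}
    (hσ : μ.map (fun ω i => X ω (σ i)) = μ.map X) {F : (ι → β) → ℝ} (hF : Measurable F) :
    ∫ ω, F (fun i => X ω (σ i)) ∂μ = ∫ ω, F (X ω) ∂μ := by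
  have hXσ : Measurable fun ω i => X ω (σ i) :=
    measurable_pi_lambda _ fun i => (measurable_pi_apply (σ i)).comp hX
  rw [← integral_map hXσ.aemeasurable hF.aestronglyMeasurable, hσ,
    integral_map hX.aemeasurable hF.aestronglyMeasurable]

theorem integral_le_of_exchangeable [Fintype ι] [IsProbabilityMeasure μ] (hX : Measurable X)
    (hexch : ∀ σ : Equiv.Perm ι, μ.map (fun ω i => X ω (σ i)) = μ.map X)
    {Φ : ι → (ι → β) → ℝ} (hΦ : ∀ j, Measurable (Φ j))
    (hequiv : ∀ (σ : Equiv.Perm ι) j f, Φ j (fun i => f (σ i)) = Φ (σ j) f)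
    (hint : ∀ j, Integrable (fun ω => Φ j (X ω)) μ) {a : ℝ}
    (hsum : ∀ᵐ ω ∂μ, ∑ j, Φ j (X ω) ≤ Fintype.card ι * a) (k : ι) :
    ∫ ω, Φ k (X ω) ∂μ ≤ a := by
  classical
  have hsymm : ∀ j, ∫ ω, Φ j (X ω) ∂μ = ∫ ω, Φ k (X ω) ∂μ := fun j => by
    rw [← integral_comp_perm_eq hX (hexch (Equiv.swap j k)) (hΦ j)]
    simp_rw [hequiv, Equiv.swap_apply_left]
  have hcard : Fintype.card ι * ∫ ω, Φ k (X ω) ∂μ ≤ Fintype.card ι * a := calc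
    _ = ∑ j, ∫ ω, Φ j (X ω) ∂μ := by simp [hsymm]
    _ = ∫ ω, ∑ j, Φ j (X ω) ∂μ := (integral_finsetSum _ fun j _ => hint j).symm
    _ ≤ ∫ _, Fintype.card ι * a ∂μ :=
      integral_mono_ae (integrable_finsetSum _ fun j _ => hint j) (integrable_const _) hsum
    _ = Fintype.card ι * a := by simp
  exact le_of_mul_le_mul_left hcard (by exact_mod_cast Fintype.card_pos_iff.2 ⟨k⟩)

end Exchangeable

section Oracle

variable {ι : Type*} [Fintype ι] {α : ℝ} {f : ι → ℝ → ℝ}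

noncomputable def oracleThreshold (α : ℝ) (f : ι → ℝ → ℝ) : ℝ :=
  ratThreshold (fun x => ∑ i, f i x) (Fintype.card ι * α)

noncomputable def oracleLoss (α : ℝ) (j : ι) (f : ι → ℝ → ℝ) : ℝ :=
  ratRightSup (f j) (oracleThreshold α f)

theorem oracleThreshold_comp_perm (σ : Equiv.Perm ι) :
    oracleThreshold α (fun i => f (σ i)) = oracleThreshold α f := by
  unfold oracleThreshold
  congr 1
  exact funext fun x => Equiv.sum_comp σ (fun i => f i x)

theorem oracleLoss_comp_perm (σ : Equiv.Perm ι) (j : ι) (f : ι → ℝ → ℝ) :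
    oracleLoss α j (fun i => f (σ i)) = oracleLoss α (σ j) f := by
  rw [oracleLoss, oracleLoss, oracleThreshold_comp_perm]

theorem measurable_oracleLoss (j : ι) : Measurable (oracleLoss (ι := ι) α j) :=
  have heval (i : ι) (x : ℝ) : Measurable fun f : ι → ℝ → ℝ => f i x :=
    (measurable_pi_apply x).comp (measurable_pi_apply i)
  measurable_ratRightSup (heval j)
    (measurable_ratThreshold (fun x => Finset.measurable_sum _ fun i _ => heval i x) _)

theorem oracleLoss_eq {j : ι} (hant : AntitoneOn (f j) (Icc 0 1))
    (hrc : ∀ x ∈ Ico 0 1, ContinuousWithinAt (f j) (Ici x) x) :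
    oracleLoss α j f = f j (oracleThreshold α f) :=
  ratRightSup_eq hant (ratThreshold_mem_Icc _ _)
    fun h => hrc _ ⟨(ratThreshold_mem_Icc _ _).1, h⟩

theorem sum_oracleLoss_le (hant : ∀ i, AntitoneOn (f i) (Icc 0 1))
    (hrc : ∀ i, ∀ x ∈ Ico 0 1, ContinuousWithinAt (f i) (Ici x) x) (h1 : ∀ i, f i 1 ≤ α) :
    ∑ i, oracleLoss α i f ≤ Fintype.card ι * α := by
  rw [Finset.sum_congr rfl fun i _ => oracleLoss_eq (hant i) (hrc i)]
  refine apply_ratThreshold_le (fun x hx => tendsto_finsetSum _ fun i _ => hrc i x hx) ?_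
  simpa using Finset.sum_le_sum fun i (_ : i ∈ Finset.univ) => h1 i

theorem oracleLoss_mem_Icc {j : ι} (h01 : ∀ x ∈ Icc 0 1, f j x ∈ Icc 0 1)
    (hant : AntitoneOn (f j) (Icc 0 1))
    (hrc : ∀ x ∈ Ico 0 1, ContinuousWithinAt (f j) (Ici x) x) : oracleLoss α j f ∈ Icc 0 1 := by
  rw [oracleLoss_eq hant hrc]
  exact h01 _ (ratThreshold_mem_Icc _ _)

end Oracle

theorem sInf_union_one_mem_Icc {s : Set ℝ} (hs : s ⊆ Icc 0 1) : sInf (s ∪ {1}) ∈ Icc 0 1 := by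
  have hnonneg : ∀ x ∈ s ∪ {1}, 0 ≤ x := by
    rintro x (hx | rfl)
    exacts [(hs hx).1, zero_le_one]
  exact ⟨Real.sInf_nonneg hnonneg, csInf_le ⟨0, hnonneg⟩ (Or.inr rfl)⟩

section Empirical

variable {n : ℕ} {α : ℝ} {f : Fin (n + 1) → ℝ → ℝ}

theorem oracleThreshold_le_sInf (hn : 1 ≤ n) (hant : ∀ i, AntitoneOn (f i) (Icc 0 1))
    (hlast : ∀ x ∈ Icc 0 1, f (Fin.last n) x ≤ 1) :
    oracleThreshold α f ≤ sInf ({lam ∈ Icc (0:ℝ) 1 |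
      (∑ i : Fin n, f i.castSucc lam) / n ≤ α - (1 - α) / n} ∪ {1}) := by
  refine le_csInf ⟨1, Or.inr rfl⟩ ?_
  rintro b (⟨hb, hbavg⟩ | rfl)
  · have hsumb : ∑ i : Fin n, f i.castSucc b ≤ n * α - (1 - α) := by
      have hnpos : (0:ℝ) < n := by exact_mod_cast hn
      rw [div_le_iff₀ hnpos] at hbavg
      calc _ ≤ (α - (1 - α) / n) * n := hbavg
        _ = _ := by field_simp
    refine ratThreshold_le hb fun y hy => ?_
    have hy01 : y ∈ Icc 0 1 := ⟨hb.1.trans hy.1, hy.2⟩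
    calc ∑ i, f i y = ∑ i : Fin n, f i.castSucc y + f (Fin.last n) y := Fin.sum_univ_castSucc _
      _ ≤ ∑ i : Fin n, f i.castSucc b + 1 :=
        add_le_add (Finset.sum_le_sum fun i _ => hant _ hb hy01 hy.1) (hlast y hy01)
      _ ≤ Fintype.card (Fin (n + 1)) * α := by
        rw [Fintype.card_fin]
        push_cast
        linarith
  · exact (ratThreshold_mem_Icc _ _).2

theorem last_apply_sInf_le_oracleLoss (hn : 1 ≤ n)
    (h01 : ∀ i, ∀ x ∈ Icc 0 1, f i x ∈ Icc 0 1) (hant : ∀ i, AntitoneOn (f i) (Icc 0 1))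
    (hrc : ∀ i, ∀ x ∈ Ico 0 1, ContinuousWithinAt (f i) (Ici x) x) :
    f (Fin.last n) (sInf ({lam ∈ Icc (0:ℝ) 1 |
      (∑ i : Fin n, f i.castSucc lam) / n ≤ α - (1 - α) / n} ∪ {1})) ≤
      oracleLoss α (Fin.last n) f := by
  rw [oracleLoss_eq (hant _) (hrc _)]
  exact hant _ (ratThreshold_mem_Icc _ _) (sInf_union_one_mem_Icc (sep_subset _ _))
    (oracleThreshold_le_sInf hn hant fun x hx => (h01 _ x hx).2)

end Empirical

theorem stmt_9_general {Ω : Type*} [MeasurableSpace Ω] (μ : Measure Ω) [IsProbabilityMeasure μ]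
    (n : ℕ) (hn : 1 ≤ n) (α : ℝ)
    (L : Fin (n+1) → Ω → ℝ → ℝ)
    (hmeas : Measurable fun ω => fun i : Fin (n+1) => L i ω)
    (hexch : ∀ σ : Equiv.Perm (Fin (n+1)),
      Measure.map (fun ω => fun i : Fin (n+1) => L (σ i) ω) μ =
        Measure.map (fun ω => fun i : Fin (n+1) => L i ω) μ)
    (h01 : ∀ᵐ ω ∂μ, ∀ i, ∀ lam ∈ Set.Icc (0:ℝ) 1, L i ω lam ∈ Set.Icc (0:ℝ) 1)
    (hant : ∀ᵐ ω ∂μ, ∀ i, AntitoneOn (L i ω) (Set.Icc (0:ℝ) 1))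
    (hrc : ∀ᵐ ω ∂μ, ∀ i, ∀ lam ∈ Set.Ico (0:ℝ) 1,
      ContinuousWithinAt (L i ω) (Set.Ici lam) lam)
    (hL1 : ∀ᵐ ω ∂μ, ∀ i, L i ω 1 ≤ α)
    (lamHat : Ω → ℝ)
    (hlamHat : ∀ ω, lamHat ω =
      sInf ({lam ∈ Set.Icc (0:ℝ) 1 |
        (∑ i : Fin n, L i.castSucc ω lam) / n ≤ α - (1 - α) / n} ∪ {1}))
    (hint : Integrable (fun ω => L (Fin.last n) ω (lamHat ω)) μ) :
    ∫ ω, L (Fin.last n) ω (lamHat ω) ∂μ ≤ α := by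
  have hΦint (j : Fin (n + 1)) : Integrable (fun ω => oracleLoss α j fun i => L i ω) μ := by
    refine (integrable_const 1).mono'
      ((measurable_oracleLoss j).comp hmeas).aestronglyMeasurable ?_
    filter_upwards [h01, hant, hrc] with ω h01 hant hrc
    have hΦ := oracleLoss_mem_Icc (α := α) (f := fun i => L i ω) (h01 j) (hant j) (hrc j)
    rw [Real.norm_of_nonneg hΦ.1]
    exact hΦ.2
  have hsum : ∀ᵐ ω ∂μ,
      ∑ j, oracleLoss α j (fun i => L i ω) ≤ Fintype.card (Fin (n + 1)) * α := by
    filter_upwards [hant, hrc, hL1] with ω hant hrc hL1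
    exact sum_oracleLoss_le (f := fun i => L i ω) hant hrc hL1
  have hlast : ∀ᵐ ω ∂μ,
      L (Fin.last n) ω (lamHat ω) ≤ oracleLoss α (Fin.last n) fun i => L i ω := by
    filter_upwards [h01, hant, hrc] with ω h01 hant hrc
    rw [hlamHat]
    exact last_apply_sInf_le_oracleLoss (f := fun i => L i ω) hn h01 hant hrc
  calc ∫ ω, L (Fin.last n) ω (lamHat ω) ∂μ
      ≤ ∫ ω, oracleLoss α (Fin.last n) (fun i => L i ω) ∂μ :=
        integral_mono_ae hint (hΦint _) hlast
    _ ≤ α := integral_le_of_exchangeable hmeas hexch measurable_oracleLoss oracleLoss_comp_perm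
        hΦint hsum _

/-- (Conformal risk control) Let L₁, …, L_{n+1} : Ω → ([0,1] → [0,1]) be an
    exchangeable family of random loss functions, almost surely antitone,
    right-continuous, and with L_i(1) ≤ α.  With
    λ̂(ω) = inf({λ ∈ [0,1] : (1/n) ∑_{i<n} L_i(ω)(λ) ≤ α - (1-α)/n} ∪ {1})
    (so λ̂ = 1 when the set is empty), we have E[L_{n+1}(λ̂)] ≤ α. -/
theorem stmt_9 {Ω : Type*} [MeasurableSpace Ω] (μ : Measure Ω) [IsProbabilityMeasure μ]
    (n : ℕ) (hn : 1 ≤ n) (α : ℝ) (hα : α ∈ Set.Ioo (0:ℝ) 1)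
    (L : Fin (n+1) → Ω → ℝ → ℝ)
    (hmeas : Measurable fun ω => fun i : Fin (n+1) => L i ω)
    (hexch : ∀ σ : Equiv.Perm (Fin (n+1)),
      Measure.map (fun ω => fun i : Fin (n+1) => L (σ i) ω) μ =
        Measure.map (fun ω => fun i : Fin (n+1) => L i ω) μ)
    (h01 : ∀ᵐ ω ∂μ, ∀ i, ∀ lam ∈ Set.Icc (0:ℝ) 1, L i ω lam ∈ Set.Icc (0:ℝ) 1)
    (hant : ∀ᵐ ω ∂μ, ∀ i, AntitoneOn (L i ω) (Set.Icc (0:ℝ) 1))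
    (hrc : ∀ᵐ ω ∂μ, ∀ i, ∀ lam ∈ Set.Ico (0:ℝ) 1,
      ContinuousWithinAt (L i ω) (Set.Ici lam) lam)
    (hL1 : ∀ᵐ ω ∂μ, ∀ i, L i ω 1 ≤ α)
    (lamHat : Ω → ℝ)
    (hlamHat : ∀ ω, lamHat ω =
      sInf ({lam ∈ Set.Icc (0:ℝ) 1 |
        (∑ i : Fin n, L i.castSucc ω lam) / n ≤ α - (1 - α) / n} ∪ {1}))
    (hint : Integrable (fun ω => L (Fin.last n) ω (lamHat ω)) μ) :
    ∫ ω, L (Fin.last n) ω (lamHat ω) ∂μ ≤ α :=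
  stmt_9_general μ n hn α L hmeas hexch h01 hant hrc hL1 lamHat hlamHat hint
end

section
/- Let L₁,…,L_{n+1} : [0,1] → [0,1] be deterministic antitone right-continuous functions with L_i(1) ≤ α, and let λ̂' = inf{λ : (1/(n+1)) ∑_{i=1}^{n+1} L_i(λ) ≤ α}. If an index I is drawn uniformly from {1,…,n+1}, then E[L_I(λ̂')] = (1/(n+1)) ∑_{i=1}^{n+1} L_i(λ̂') ≤ α. -/
/-! The empirical risk `λ ↦ (∑ i, L i λ) / (n+1)` is at most `α` at `λ = 1`, so its `α`-sublevel set
in `[0,1]` is nonempty, and its infimum `λ̂'` is a limit from the right of points of that set.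
Right-continuity of the risk then carries the bound `≤ α` over to `λ̂'`. -/

open MeasureTheory

theorem PMF.integral_uniformOfFintype {ι : Type*} [Fintype ι] [Nonempty ι] [MeasurableSpace ι]
    [MeasurableSingletonClass ι] (f : ι → ℝ) :
    ∫ i, f i ∂(PMF.uniformOfFintype ι).toMeasure = (∑ i, f i) / Fintype.card ι := by
  simp only [PMF.integral_eq_sum, PMF.uniformOfFintype_apply, ENNReal.toReal_inv,
    ENNReal.toReal_natCast, smul_eq_mul, ← Finset.mul_sum]
  exact inv_mul_eq_div _ _

theorem le_of_continuousWithinAt_Ici_csInf {S : Set ℝ} {f : ℝ → ℝ} {c : ℝ}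
    (hne : S.Nonempty) (hbdd : BddBelow S) (hS : ∀ x ∈ S, f x ≤ c)
    (hf : ContinuousWithinAt f (Set.Ici (sInf S)) (sInf S)) : f (sInf S) ≤ c := by
  have hfS : ContinuousWithinAt f S (sInf S) := hf.mono fun x hx => csInf_le hbdd hx
  have hclosure : closure (f '' S) ⊆ Set.Iic c :=
    closure_minimal (Set.image_subset_iff.mpr hS) isClosed_Iic
  exact hclosure (hfS.mem_closure_image (csInf_mem_closure hne hbdd))

theorem stmt_10_general (n : ℕ) (L : Fin (n+1) → ℝ → ℝ)
    (hrc : ∀ i, ∀ lam ∈ Set.Ico (0:ℝ) 1, ContinuousWithinAt (L i) (Set.Ici lam) lam)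
    (α : ℝ)
    (hL1 : ∀ i, L i 1 ≤ α)
    (lamHat' : ℝ)
    (hlamHat' : lamHat' =
      sInf {lam ∈ Set.Icc (0:ℝ) 1 | (∑ i, L i lam) / (n+1) ≤ α}) :
    (∫ i, L i lamHat' ∂((PMF.uniformOfFintype (Fin (n+1))).toMeasure)
        = (∑ i, L i lamHat') / (n+1)) ∧
    (∑ i, L i lamHat') / (n+1) ≤ α := by
  refine ⟨by simp [PMF.integral_uniformOfFintype], ?_⟩
  set S := {lam ∈ Set.Icc (0:ℝ) 1 | (∑ i, L i lam) / (n+1) ≤ α}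
  have h1S : (1:ℝ) ∈ S := by
    refine ⟨by norm_num, (div_le_iff₀ (by positivity)).mpr ?_⟩
    calc ∑ i, L i 1 ≤ ∑ _i : Fin (n+1), α := Finset.sum_le_sum fun i _ => hL1 i
      _ = α * (n+1) := by simp [mul_comm]
  have hbdd : BddBelow S := ⟨0, fun x hx => hx.1.1⟩
  have hle1 : lamHat' ≤ 1 := hlamHat' ▸ csInf_le hbdd h1S
  have hge0 : 0 ≤ lamHat' := hlamHat' ▸ le_csInf ⟨1, h1S⟩ fun x hx => hx.1.1
  rcases hle1.eq_or_lt with rfl | hlt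
  · exact h1S.2
  subst hlamHat'
  refine le_of_continuousWithinAt_Ici_csInf ⟨1, h1S⟩ hbdd (fun x hx => hx.2) ?_
  exact (tendsto_finsetSum _ fun i _ => hrc i _ ⟨hge0, hlt⟩).div_const _

/-- For deterministic antitone right-continuous losses with L_i(1) ≤ α and
    λ̂' = inf{λ ∈ [0,1] : (1/(n+1)) ∑ L_i(λ) ≤ α}, a uniformly random index I
    satisfies E[L_I(λ̂')] = (1/(n+1)) ∑_i L_i(λ̂') ≤ α. -/
theorem stmt_10 (n : ℕ) (hn : 1 ≤ n) (L : Fin (n+1) → ℝ → ℝ)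
    (hL : ∀ i, ∀ lam ∈ Set.Icc (0:ℝ) 1, L i lam ∈ Set.Icc (0:ℝ) 1)
    (hant : ∀ i, AntitoneOn (L i) (Set.Icc (0:ℝ) 1))
    (hrc : ∀ i, ∀ lam ∈ Set.Ico (0:ℝ) 1, ContinuousWithinAt (L i) (Set.Ici lam) lam)
    (α : ℝ) (hα : α ∈ Set.Ioo (0:ℝ) 1)
    (hL1 : ∀ i, L i 1 ≤ α)
    (lamHat' : ℝ)
    (hlamHat' : lamHat' =
      sInf {lam ∈ Set.Icc (0:ℝ) 1 | (∑ i, L i lam) / (n+1) ≤ α}) :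
    (∫ i, L i lamHat' ∂((PMF.uniformOfFintype (Fin (n+1))).toMeasure)
        = (∑ i, L i lamHat') / (n+1)) ∧
    (∑ i, L i lamHat') / (n+1) ≤ α :=
  stmt_10_general n L hrc α hL1 lamHat' hlamHat'
end
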